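/- arXiv:1810.05266 — 2 statements merged into one kernel-verified Lean document; each statement's English description precedes it below -/
import Mathlib

section
/- If P is a solvable pebble distribution on a vertex-transitive graph G, then |P| ≥ (|V(G)| + TE(P)) / eff(v), where eff(v) = Σ_{i=0}^{diam(G)} (1/2)^i |N_i(v)| (independent of the choice of v by vertex transitivity). -/
open Finset

/-- A pebbling move: remove two pebbles from `src`, add one to `tgt`. -/
structure PMove (V : Type*) where
  src : V
  tgt : V

/-- Result of applying one pebbling move to a distribution. -/
def applyMove {V : Type*} [DecidableEq V] (p : V → ℕ) (m : PMove V) : V → ℕ :=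
  fun w => if w = m.src then p w - 2 else if w = m.tgt then p w + 1 else p w

/-- A list of moves is executable: each move goes along an edge and has
two pebbles available at its source. -/
def Executable {V : Type*} [DecidableEq V] (G : SimpleGraph V) :
    (V → ℕ) → List (PMove V) → Prop
  | _, [] => True
  | p, m :: ms => G.Adj m.src m.tgt ∧ 2 ≤ p m.src ∧ Executable G (applyMove p m) ms

/-- The distribution obtained after applying a sequence of moves. -/
def applySeq {V : Type*} [DecidableEq V] (p : V → ℕ) (σ : List (PMove V)) : V → ℕ :=
  σ.foldl applyMove p

/-- `v` is `k`-reachable under `p`. -/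
def KReachable {V : Type*} [DecidableEq V] (G : SimpleGraph V) (p : V → ℕ) (k : ℕ) (v : V) :
    Prop :=
  ∃ σ : List (PMove V), Executable G p σ ∧ k ≤ applySeq p σ v

/-- `v` is reachable under `p`: some pebbling sequence puts a pebble on `v`. -/
def Reachable' {V : Type*} [DecidableEq V] (G : SimpleGraph V) (p : V → ℕ) (v : V) : Prop :=
  KReachable G p 1 v

/-- The maximal number of pebbles that can be moved to `v`. -/
noncomputable def reach {V : Type*} [DecidableEq V] (G : SimpleGraph V) (p : V → ℕ) (v : V) :
    ℕ :=
  sSup {k | KReachable G p k v}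

/-- The excess of `v` under `p`. -/
noncomputable def exc {V : Type*} [DecidableEq V] (G : SimpleGraph V) (p : V → ℕ) (v : V) :
    ℕ :=
  reach G p v - 1

/-- The total excess of `p`. -/
noncomputable def TE {V : Type*} [Fintype V] [DecidableEq V] (G : SimpleGraph V)
    (p : V → ℕ) : ℕ :=
  ∑ v, exc G p v

/-- `p` is solvable: every vertex is reachable. -/
def Solvable {V : Type*} [DecidableEq V] (G : SimpleGraph V) (p : V → ℕ) : Prop :=
  ∀ v, Reachable' G p v

/-- The number of vertices reachable under `p`. -/
noncomputable def cov {V : Type*} [DecidableEq V] (G : SimpleGraph V) (p : V → ℕ) : ℕ :=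
  Set.ncard {v | Reachable' G p v}

/-- The number of cooperation vertices of the pair `(p, q)`. -/
noncomputable def coop {V : Type*} [DecidableEq V] (G : SimpleGraph V) (p q : V → ℕ) : ℕ :=
  Set.ncard {v | Reachable' G (p + q) v ∧ ¬ Reachable' G p v ∧ ¬ Reachable' G q v}

/-- The number of double covered vertices of the pair `(p, q)`. -/
noncomputable def DC {V : Type*} [DecidableEq V] (G : SimpleGraph V) (p q : V → ℕ) : ℕ :=
  Set.ncard {v | Reachable' G p v ∧ Reachable' G q v}

/-- The cooperation excess between `p` and `q`. -/
noncomputable def CE {V : Type*} [Fintype V] [DecidableEq V] (G : SimpleGraph V)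
    (p q : V → ℕ) : ℤ :=
  (TE G (p + q) : ℤ) - TE G p - TE G q

/-- The effect of a pebble placed at `v`. -/
noncomputable def eff {V : Type*} (G : SimpleGraph V) (v : V) : ℚ :=
  ∑ i ∈ Finset.range (G.diam + 1), (1 / 2 : ℚ) ^ i * (Set.ncard {u | G.dist v u = i})

/-- The optimal pebbling number of `G`. -/
noncomputable def piOpt {V : Type*} [Fintype V] [DecidableEq V] (G : SimpleGraph V) : ℕ :=
  sInf {k | ∃ p : V → ℕ, Solvable G p ∧ ∑ v, p v = k}

section Aux
variable {V : Type*} [Fintype V] [DecidableEq V] {G : SimpleGraph V}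

lemma dist_iso (hconn : G.Connected) (φ : G ≃g G) (a b : V) :
    G.dist (φ a) (φ b) = G.dist a b := by
  have key : ∀ (ψ : G ≃g G) (a b : V), G.dist (ψ a) (ψ b) ≤ G.dist a b := by
    intro ψ a b
    obtain ⟨p, hp⟩ := hconn.exists_walk_length_eq_dist a b
    calc G.dist (ψ a) (ψ b) ≤ (p.map ψ.toHom).length := SimpleGraph.dist_le _
      _ = p.length := SimpleGraph.Walk.length_map _ _
      _ = G.dist a b := hp
  refine le_antisymm (key φ a b) ?_
  have := key φ.symm (φ a) (φ b)
  simpa using this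

noncomputable def wt (G : SimpleGraph V) (u : V) (p : V → ℕ) : ℚ :=
  ∑ x, (p x : ℚ) * (2 : ℚ)⁻¹ ^ (G.dist u x)

lemma wt_nonneg (u : V) (p : V → ℕ) : 0 ≤ wt G u p :=
  Finset.sum_nonneg fun x _ => mul_nonneg (Nat.cast_nonneg _) (by positivity)

lemma wt_move (hconn : G.Connected) (u : V) (p : V → ℕ) (m : PMove V)
    (hadj : G.Adj m.src m.tgt) (h2 : 2 ≤ p m.src) :
    wt G u (applyMove p m) ≤ wt G u p := by
  obtain ⟨s, t⟩ := m
  simp only at hadj h2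
  have hst : s ≠ t := hadj.ne
  set w : V → ℚ := fun x => (2 : ℚ)⁻¹ ^ (G.dist u x) with hw
  have hwpos : ∀ x, 0 < w x := fun x => by positivity
  have hkey : w t ≤ 2 * w s := by
    have hd : G.dist u s ≤ G.dist u t + 1 := by
      have := hconn.dist_triangle (u := u) (v := t) (w := s)
      have h1 : G.dist t s = 1 := SimpleGraph.dist_eq_one_iff_adj.mpr hadj.symm
      omega
    have hp2 : (2 : ℚ)⁻¹ ^ (G.dist u t + 1) ≤ (2 : ℚ)⁻¹ ^ (G.dist u s) :=
      pow_le_pow_of_le_one (by norm_num) (by norm_num) hd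
    rw [pow_succ] at hp2
    have h3 := hwpos s
    have h4 := hwpos t
    simp only [hw] at *
    nlinarith
  have hs : applyMove p ⟨s, t⟩ s = p s - 2 := by simp [applyMove]
  have ht : applyMove p ⟨s, t⟩ t = p t + 1 := by simp [applyMove, hst.symm]
  have ho : ∀ x, x ≠ s → x ≠ t → applyMove p ⟨s, t⟩ x = p x := by
    intro x h1 h2; simp [applyMove, h1, h2]
  have heq : wt G u (applyMove p ⟨s, t⟩) = wt G u p - 2 * w s + w t := by
    have hterm : ∀ x, (applyMove p ⟨s, t⟩ x : ℚ) * w x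
        = (p x : ℚ) * w x + (if x = s then -(2 * w s) else 0) + (if x = t then w t else 0) := by
      intro x
      by_cases hxs : x = s
      · subst hxs
        rw [hs, if_pos rfl, if_neg hst, Nat.cast_sub h2]
        push_cast
        ring
      · by_cases hxt : x = t
        · subst hxt
          rw [ht, if_neg hxs, if_pos rfl]
          push_cast
          ring
        · rw [ho x hxs hxt, if_neg hxs, if_neg hxt]
          ring
    unfold wt
    rw [Finset.sum_congr rfl fun x _ => hterm x]
    rw [Finset.sum_add_distrib, Finset.sum_add_distrib, Finset.sum_ite_eq' univ s,
      Finset.sum_ite_eq' univ t]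
    simp only [Finset.mem_univ, if_pos, hw]
    ring
  rw [heq]
  linarith

lemma wt_seq (hconn : G.Connected) (u : V) (p : V → ℕ) (σ : List (PMove V))
    (hex : Executable G p σ) : wt G u (applySeq p σ) ≤ wt G u p := by
  induction σ generalizing p with
  | nil => simp [applySeq]
  | cons m ms ih =>
    obtain ⟨hadj, h2, hex'⟩ := hex
    calc wt G u (applySeq p (m :: ms)) = wt G u (applySeq (applyMove p m) ms) := rfl
      _ ≤ wt G u (applyMove p m) := ih _ hex'
      _ ≤ wt G u p := wt_move hconn u p m hadj h2

lemma KReachable_le_wt (hconn : G.Connected) {p : V → ℕ} {k : ℕ} {u : V}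
    (h : KReachable G p k u) : (k : ℚ) ≤ wt G u p := by
  obtain ⟨σ, hex, hk⟩ := h
  have h1 : (applySeq p σ u : ℚ) ≤ wt G u (applySeq p σ) := by
    have := Finset.single_le_sum
      (f := fun x => (applySeq p σ x : ℚ) * (2:ℚ)⁻¹ ^ (G.dist u x))
      (fun x _ => mul_nonneg (Nat.cast_nonneg _) (by positivity)) (Finset.mem_univ u)
    simpa [wt, SimpleGraph.dist_self] using this
  calc (k : ℚ) ≤ (applySeq p σ u : ℚ) := by exact_mod_cast hk
    _ ≤ wt G u (applySeq p σ) := h1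
    _ ≤ wt G u p := wt_seq hconn u p σ hex

lemma kset_bdd (hconn : G.Connected) (p : V → ℕ) (u : V) :
    ∀ k ∈ {k | KReachable G p k u}, k ≤ Nat.floor (wt G u p) := fun k hk =>
  Nat.le_floor (KReachable_le_wt hconn hk)

lemma reach_le_wt (hconn : G.Connected) (p : V → ℕ) (u : V) :
    (reach G p u : ℚ) ≤ wt G u p := by
  have hne : Set.Nonempty {k | KReachable G p k u} :=
    ⟨0, ⟨[], trivial, Nat.zero_le _⟩⟩
  have : reach G p u ≤ Nat.floor (wt G u p) :=
    csSup_le hne (kset_bdd hconn p u)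
  calc (reach G p u : ℚ) ≤ (Nat.floor (wt G u p) : ℚ) := by exact_mod_cast this
    _ ≤ wt G u p := Nat.floor_le (wt_nonneg u p)

lemma one_le_reach (hconn : G.Connected) {p : V → ℕ} {u : V}
    (h : Reachable' G p u) : 1 ≤ reach G p u :=
  le_csSup ⟨Nat.floor (wt G u p), kset_bdd hconn p u⟩ h

lemma eff_eq_sum (hconn : G.Connected) (u : V) :
    eff G u = ∑ x, (2 : ℚ)⁻¹ ^ (G.dist u x) := by
  have hedtop : G.ediam ≠ ⊤ := by
    have : Nonempty V := hconn.nonempty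
    obtain ⟨a, b, hab⟩ := SimpleGraph.exists_edist_eq_ediam_of_finite (G := G)
    rw [← hab]
    exact SimpleGraph.edist_ne_top_iff_reachable.mpr (hconn a b)
  have hmaps : ∀ x ∈ (univ : Finset V), G.dist u x ∈ Finset.range (G.diam + 1) := by
    intro x _
    rw [Finset.mem_range, Nat.lt_succ_iff]
    exact SimpleGraph.dist_le_diam hedtop
  rw [← Finset.sum_fiberwise_of_maps_to hmaps (fun x => (2 : ℚ)⁻¹ ^ (G.dist u x))]
  unfold eff
  refine Finset.sum_congr rfl fun i hi => ?_
  have hset : {x | G.dist u x = i} = ↑(univ.filter fun x => G.dist u x = i) := by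
    ext x; simp
  rw [hset, Set.ncard_coe_finset]
  rw [Finset.sum_congr rfl (fun x hx => by rw [(Finset.mem_filter.mp hx).2])]
  rw [Finset.sum_const, nsmul_eq_mul]
  rw [one_div]
  ring

lemma eff_const (hconn : G.Connected) (htrans : ∀ u v : V, ∃ φ : G ≃g G, φ u = v)
    (u v : V) : eff G u = eff G v := by
  obtain ⟨φ, hφ⟩ := htrans v u
  rw [eff_eq_sum hconn u, eff_eq_sum hconn v]
  rw [← hφ]
  rw [← Equiv.sum_comp φ.toEquiv (fun x => (2 : ℚ)⁻¹ ^ (G.dist (φ v) x))]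
  refine Finset.sum_congr rfl fun x _ => ?_
  rw [show φ.toEquiv x = φ x from rfl, dist_iso hconn φ]

end Aux

/-- If `P` is solvable on a connected vertex-transitive graph `G`, then
`|P| ≥ (|V(G)| + TE(P)) / eff(v)` for every vertex `v`. -/
theorem stmt1 {V : Type*} [Fintype V] [DecidableEq V] (G : SimpleGraph V)
    (hconn : G.Connected) (htrans : ∀ u v : V, ∃ φ : G ≃g G, φ u = v)
    (P : V → ℕ) (hP : Solvable G P) (v : V) :
    ((Fintype.card V : ℚ) + (TE G P : ℚ)) / eff G v ≤ ∑ u, (P u : ℚ) := by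
  have heffpos : 0 < eff G v := by
    rw [eff_eq_sum hconn v]
    have : Nonempty V := hconn.nonempty
    exact Finset.sum_pos (fun x _ => by positivity) Finset.univ_nonempty
  rw [div_le_iff₀ heffpos]
  have hTE : (Fintype.card V : ℚ) + (TE G P : ℚ) = ∑ u, (reach G P u : ℚ) := by
    have h1 : ∀ u : V, ((exc G P u : ℚ)) = (reach G P u : ℚ) - 1 := fun u => by
      unfold exc
      rw [Nat.cast_sub (one_le_reach hconn (hP u))]
      norm_num
    rw [TE, Nat.cast_sum, Finset.sum_congr rfl fun u _ => h1 u,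
      Finset.sum_sub_distrib, Finset.sum_const, Finset.card_univ, nsmul_eq_mul]
    ring
  rw [hTE]
  have hsum : ∑ u, (reach G P u : ℚ) ≤ ∑ u, wt G u P :=
    Finset.sum_le_sum fun u _ => reach_le_wt hconn P u
  have hswap : ∑ u, wt G u P = (∑ u, (P u : ℚ)) * eff G v := by
    have hx : ∀ x : V, ∑ u, (2:ℚ)⁻¹ ^ (G.dist u x) = eff G v := by
      intro x
      rw [← eff_const hconn htrans x v, eff_eq_sum hconn x]
      exact Finset.sum_congr rfl fun u _ => by rw [SimpleGraph.dist_comm]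
    unfold wt
    rw [Finset.sum_comm, Finset.sum_mul]
    refine Finset.sum_congr rfl fun x _ => ?_
    rw [← Finset.mul_sum, hx x]
  linarith
end

section
/- Let U be a unit distribution on the torus grid T_{m,n} with min(m,n) ≥ 5. Then TE(U) ≥ 0 if |U| = 1, TE(U) ≥ (1/2)|U| if 2 ≤ |U| ≤ 3, and TE(U) ≥ (8/5)|U| if |U| ≥ 4. -/
open Finset

/-!
A pebbling move destroys a pebble, so no vertex can ever hold more pebbles than the initial
total and `reach` is a genuine maximum. The `b` pebbles on `u` give `u` excess at least `b - 1`,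
and moving pebbles pairwise along one edge brings `⌊b/2⌋` of them to any neighbour, whose excess
is then at least `⌊b/2⌋ - 1`. On the torus `u` has four distinct neighbours, so
`TE(U) ≥ (b - 1) + 4 (⌊b/2⌋ - 1)`, which is `≥ b/2` for `b ≥ 2` and `≥ 8b/5` for `b ≥ 4`.
-/

section Pebbling

variable {V : Type*} [DecidableEq V]

lemma sum_applyMove_le [Fintype V] (p : V → ℕ) (m : PMove V) (h : 2 ≤ p m.src) :
    ∑ w, applyMove p m w ≤ ∑ w, p w := by
  have key : ∀ w, applyMove p m w + (if w = m.src then 2 else 0)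
      ≤ p w + (if w = m.tgt then 1 else 0) := by
    intro w
    by_cases hw : w = m.src
    · subst hw
      simp only [applyMove]
      split_ifs <;> omega
    · simp only [applyMove, if_neg hw]
      split_ifs <;> omega
  have hsum := Finset.sum_le_sum fun w (_ : w ∈ univ) => key w
  simp only [Finset.sum_add_distrib, Finset.sum_ite_eq', Finset.mem_univ, if_true] at hsum
  omega

lemma sum_applySeq_le [Fintype V] (G : SimpleGraph V) (σ : List (PMove V)) :
    ∀ p : V → ℕ, Executable G p σ → ∑ w, applySeq p σ w ≤ ∑ w, p w := by
  induction σ with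
  | nil => intro p _; simp [applySeq]
  | cons m ms ih =>
    rintro p ⟨-, hsrc, hex⟩
    exact (ih _ hex).trans (sum_applyMove_le p m hsrc)

lemma le_reach_of_kReachable [Fintype V] {G : SimpleGraph V} {p : V → ℕ} {k : ℕ} {v : V}
    (h : KReachable G p k v) : k ≤ reach G p v := by
  refine le_csSup ⟨∑ w, p w, ?_⟩ h
  rintro x ⟨σ, hex, hle⟩
  calc x ≤ applySeq p σ v := hle
    _ ≤ ∑ w, applySeq p σ w := Finset.single_le_sum (fun _ _ => Nat.zero_le _) (mem_univ v)
    _ ≤ ∑ w, p w := sum_applySeq_le G σ p hex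

lemma le_reach_self [Fintype V] (G : SimpleGraph V) (p : V → ℕ) (v : V) :
    p v ≤ reach G p v :=
  le_reach_of_kReachable ⟨[], trivial, le_rfl⟩

lemma executable_replicate {G : SimpleGraph V} {a c : V} (hadj : G.Adj a c) (t : ℕ) :
    ∀ p : V → ℕ, 2 * t ≤ p a →
      Executable G p (List.replicate t ⟨a, c⟩) ∧
        p c + t ≤ applySeq p (List.replicate t ⟨a, c⟩) c := by
  have hca : c ≠ a := hadj.ne.symm
  induction t with
  | zero => intro p _; simp [Executable, applySeq]
  | succ t ih =>
    intro p hp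
    have hsrc : applyMove p ⟨a, c⟩ a = p a - 2 := by simp [applyMove]
    have htgt : applyMove p ⟨a, c⟩ c = p c + 1 := by simp [applyMove, hca]
    obtain ⟨hex, hle⟩ := ih (applyMove p ⟨a, c⟩) (by omega)
    rw [htgt] at hle
    refine ⟨⟨hadj, show 2 ≤ p a by omega, hex⟩, ?_⟩
    change p c + (t + 1) ≤ applySeq (applyMove p ⟨a, c⟩) (List.replicate t ⟨a, c⟩) c
    omega

lemma le_reach_of_adj [Fintype V] {G : SimpleGraph V} {a c : V} (hadj : G.Adj a c)
    (p : V → ℕ) : p a / 2 ≤ reach G p c := by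
  obtain ⟨hex, hle⟩ := executable_replicate hadj (p a / 2) p (Nat.mul_div_le (p a) 2)
  exact le_reach_of_kReachable ⟨_, hex, le_of_add_le_right hle⟩

/-- The first two terms of the paper's lower bound `TE(U) = Σᵢ |Nᵢ(u)| (⌊|U|/2^i⌋ - 1)`. -/
lemma le_TE_of_degree [Fintype V] (G : SimpleGraph V) (u : V) [Fintype (G.neighborSet u)]
    (p : V → ℕ) : p u - 1 + G.degree u * (p u / 2 - 1) ≤ TE G p := by
  have hu : u ∉ G.neighborFinset u := by simp
  have hnbr : ∀ v ∈ G.neighborFinset u, p u / 2 - 1 ≤ exc G p v := fun v hv =>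
    Nat.sub_le_sub_right (le_reach_of_adj ((G.mem_neighborFinset u v).1 hv) p) 1
  calc p u - 1 + G.degree u * (p u / 2 - 1)
      ≤ exc G p u + ∑ v ∈ G.neighborFinset u, exc G p v := by
        gcongr
        · exact Nat.sub_le_sub_right (le_reach_self G p u) 1
        · rw [SimpleGraph.degree, ← smul_eq_mul, ← Finset.sum_const]
          exact Finset.sum_le_sum hnbr
    _ = ∑ v ∈ insert u (G.neighborFinset u), exc G p v := (Finset.sum_insert hu).symm
    _ ≤ TE G p := Finset.sum_le_sum_of_subset (Finset.subset_univ _)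

end Pebbling

lemma degree_boxProd_cycleGraph {m n : ℕ} (hm : 3 ≤ m) (hn : 3 ≤ n) (x : Fin m × Fin n)
    [Fintype (((SimpleGraph.cycleGraph m).boxProd (SimpleGraph.cycleGraph n)).neighborSet x)] :
    ((SimpleGraph.cycleGraph m).boxProd (SimpleGraph.cycleGraph n)).degree x = 4 := by
  obtain ⟨m, rfl⟩ := Nat.exists_eq_add_of_le' hm
  obtain ⟨n, rfl⟩ := Nat.exists_eq_add_of_le' hn
  rw [SimpleGraph.degree_boxProd, SimpleGraph.cycleGraph_degree_three_le,
    SimpleGraph.cycleGraph_degree_three_le]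

theorem stmt16_general (m n : ℕ) (hm : 5 ≤ m) (hn : 5 ≤ n) (u : Fin m × Fin n)
    (b : ℕ) (U : Fin m × Fin n → ℕ)
    (hU : U = fun w => if w = u then b else 0) :
    (b = 1 →
      (0 : ℚ) ≤ (TE ((SimpleGraph.cycleGraph m).boxProd (SimpleGraph.cycleGraph n)) U : ℚ)) ∧
    (2 ≤ b → b ≤ 3 →
      (1 / 2 : ℚ) * b
        ≤ (TE ((SimpleGraph.cycleGraph m).boxProd (SimpleGraph.cycleGraph n)) U : ℚ)) ∧
    (4 ≤ b →
      (8 / 5 : ℚ) * b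
        ≤ (TE ((SimpleGraph.cycleGraph m).boxProd (SimpleGraph.cycleGraph n)) U : ℚ)) := by
  classical
  set G := (SimpleGraph.cycleGraph m).boxProd (SimpleGraph.cycleGraph n)
  have hbound : b - 1 + 4 * (b / 2 - 1) ≤ TE G U := by
    have h := le_TE_of_degree G u U
    rw [degree_boxProd_cycleGraph (by omega) (by omega) u] at h
    simpa [hU] using h
  refine ⟨fun _ => by positivity, fun h2 h3 => ?_, fun h4 => ?_⟩
  · have : 2 * b ≤ 4 * TE G U := by omega
    have : (2 * b : ℚ) ≤ 4 * TE G U := by exact_mod_cast this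
    linarith
  · have : 8 * b ≤ 5 * TE G U := by omega
    have : (8 * b : ℚ) ≤ 5 * TE G U := by exact_mod_cast this
    linarith

/-- For a unit `U` of size `b` on the torus grid `C_m □ C_n` (`m, n ≥ 5`):
`TE(U) ≥ 0` if `b = 1`, `TE(U) ≥ (1/2)b` if `2 ≤ b ≤ 3`, and `TE(U) ≥ (8/5)b` if
`b ≥ 4`. -/
theorem stmt16 (m n : ℕ) (hm : 5 ≤ m) (hn : 5 ≤ n) (u : Fin m × Fin n)
    (b : ℕ) (hb : 1 ≤ b) (U : Fin m × Fin n → ℕ)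
    (hU : U = fun w => if w = u then b else 0) :
    (b = 1 →
      (0 : ℚ) ≤ (TE ((SimpleGraph.cycleGraph m).boxProd (SimpleGraph.cycleGraph n)) U : ℚ)) ∧
    (2 ≤ b → b ≤ 3 →
      (1 / 2 : ℚ) * b
        ≤ (TE ((SimpleGraph.cycleGraph m).boxProd (SimpleGraph.cycleGraph n)) U : ℚ)) ∧
    (4 ≤ b →
      (8 / 5 : ℚ) * b
        ≤ (TE ((SimpleGraph.cycleGraph m).boxProd (SimpleGraph.cycleGraph n)) U : ℚ)) :=
  stmt16_general m n hm hn u b U hU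
end
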